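/- Let X be a finite nonempty set of solutions, c a weight function on elements, and x a minimum-weight solution in X (with each solution identified with a finite set of elements, all of the same cardinality). Suppose every x' ∈ X \ {x} can be written as x' = (x \ ⋃_{i=1}^t F_i) ∪ (⋃_{i=1}^t F'_i) for pairwise disjoint exchange pairs (F_i, F'_i) with F_i ⊆ x \ x', F'_i ⊆ x' \ x, each of which individually yields a member of X, and that c(F) − c(F') ≤ 0 for every such exchange pair (F, F') at x. If (F_0, F'_0) maximizes c(F) − c(F') among all exchange pairs at x, then x_0 = (x \ F_0) ∪ F'_0 satisfies c(x_0) ≤ c(x') for all x' ∈ X \ {x}, i.e., x_0 is a second-best solution. -/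
import Mathlib


/-- `(F, F')` is an exchange pair at the solution `x` for the family `X`:
`F` is a nonempty subset of `x`, `F'` is disjoint from `x`, they have the same
cardinality, and performing the exchange yields a member of `X`. -/
def ExchPair {α : Type*} [DecidableEq α] (X : Finset (Finset α)) (x F F' : Finset α) : Prop :=
  F ⊆ x ∧ Disjoint F' x ∧ F.Nonempty ∧ F.card = F'.card ∧ (x \ F) ∪ F' ∈ X

theorem stmt_7 {α : Type*} [DecidableEq α] (X : Finset (Finset α)) (hX : X.Nonempty)
    (c : α → ℝ) (r : ℕ) (hr : ∀ y ∈ X, y.card = r)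
    (x : Finset α) (hx : x ∈ X)
    (hmin : ∀ y ∈ X, ∑ e ∈ x, c e ≤ ∑ e ∈ y, c e)
    -- every other solution decomposes into pairwise disjoint exchange pairs at x
    (hdecomp : ∀ x' ∈ X, x' ≠ x → ∃ (t : ℕ) (F F' : Fin t → Finset α),
      (∀ i, F i ⊆ x \ x') ∧ (∀ i, F' i ⊆ x' \ x) ∧
      (∀ i j, i ≠ j → Disjoint (F i) (F j)) ∧
      (∀ i j, i ≠ j → Disjoint (F' i) (F' j)) ∧
      (∀ i, ExchPair X x (F i) (F' i)) ∧
      x' = (x \ Finset.univ.biUnion F) ∪ Finset.univ.biUnion F')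
    -- every exchange pair at x has nonpositive gain
    (hnonpos : ∀ F F', ExchPair X x F F' → ∑ e ∈ F, c e - ∑ e ∈ F', c e ≤ 0)
    (F₀ F₀' : Finset α) (h₀ : ExchPair X x F₀ F₀')
    (hmax : ∀ F F', ExchPair X x F F' →
      ∑ e ∈ F, c e - ∑ e ∈ F', c e ≤ ∑ e ∈ F₀, c e - ∑ e ∈ F₀', c e) :
    ∀ x' ∈ X, x' ≠ x → ∑ e ∈ (x \ F₀) ∪ F₀', c e ≤ ∑ e ∈ x', c e := by
  intro x' hx' hne
  obtain ⟨t, F, F', hFx, hF'x, hdF, hdF', hexch, hx'eq⟩ := hdecomp x' hx' hne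
  -- t ≥ 1
  have ht : t ≠ 0 := by
    rintro rfl
    exact hne (by simp [hx'eq])
  set U := Finset.univ.biUnion F with hU
  set U' := Finset.univ.biUnion F' with hU'
  have hUx : U ⊆ x := by
    intro a ha
    obtain ⟨i, _, hi⟩ := Finset.mem_biUnion.mp ha
    exact (Finset.mem_sdiff.mp (hFx i hi)).1
  have hU'x : Disjoint U' x := by
    rw [Finset.disjoint_left]
    intro a ha hax
    obtain ⟨i, _, hi⟩ := Finset.mem_biUnion.mp ha
    exact (Finset.mem_sdiff.mp (hF'x i hi)).2 hax
  -- helper for computing sums over (x \ S) ∪ S'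
  have key : ∀ (S S' : Finset α), S ⊆ x → Disjoint S' x →
      ∑ e ∈ (x \ S) ∪ S', c e = ∑ e ∈ x, c e - ∑ e ∈ S, c e + ∑ e ∈ S', c e := by
    intro S S' hS hS'
    rw [Finset.sum_union (hS'.symm.mono_left Finset.sdiff_subset)]
    have := Finset.sum_sdiff (f := c) hS
    linarith
  have hsum0 := key F₀ F₀' h₀.1 h₀.2.1
  have hsum' := key U U' hUx hU'x
  have hUsum : ∑ e ∈ U, c e = ∑ i, ∑ e ∈ F i, c e := by
    rw [hU, Finset.sum_biUnion]
    intro i _ j _ hij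
    exact hdF i j hij
  have hU'sum : ∑ e ∈ U', c e = ∑ i, ∑ e ∈ F' i, c e := by
    rw [hU', Finset.sum_biUnion]
    intro i _ j _ hij
    exact hdF' i j hij
  -- the gains
  obtain ⟨i0⟩ : Nonempty (Fin t) := ⟨⟨0, Nat.pos_of_ne_zero ht⟩⟩
  have hsplit : (∑ e ∈ F i0, c e - ∑ e ∈ F' i0, c e) +
      ∑ i ∈ Finset.univ.erase i0, (∑ e ∈ F i, c e - ∑ e ∈ F' i, c e) =
      ∑ i, (∑ e ∈ F i, c e - ∑ e ∈ F' i, c e) := Finset.add_sum_erase Finset.univ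
    (fun i => ∑ e ∈ F i, c e - ∑ e ∈ F' i, c e) (Finset.mem_univ i0)
  have hrest : ∑ i ∈ Finset.univ.erase i0, (∑ e ∈ F i, c e - ∑ e ∈ F' i, c e) ≤ 0 :=
    Finset.sum_nonpos fun i _ => hnonpos _ _ (hexch i)
  have hi0 := hmax _ _ (hexch i0)
  have hgain : ∑ i, (∑ e ∈ F i, c e - ∑ e ∈ F' i, c e)
      ≤ ∑ e ∈ F₀, c e - ∑ e ∈ F₀', c e := by linarith
  rw [hx'eq, hsum', hUsum, hU'sum, hsum0, Finset.sum_sub_distrib] at *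
  linarith
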